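/- Let (Ω, 𝓕, P) be a probability space, S : Ω → ℝᵐˣⁿ measurable and essentially bounded, and let (R̃ₖ)ₖ∈ℕ (values in ℝᵐˣᵐ), (S̄ₖ)ₖ∈ℕ (values in ℝᵐˣⁿ), (S̃ₖ)ₖ∈ℕ (values in ℝⁿˣᵐ), (Q̃ₖ)ₖ∈ℕ (values in ℝⁿˣⁿ) be sequences of measurable matrix-valued random variables with ∑ₖ E|R̃ₖ|² < ∞, ∑ₖ E|S̄ₖ|² < ∞, ∑ₖ E|S̃ₖ|² < ∞, ∑ₖ E|Q̃ₖ|² < ∞, and let (Ŝᵢⱼ)ᵢ,ⱼ∈ℕ be integrable ℝᵐˣⁿ-valued random variables with ∑ᵢ,ⱼ |E[Ŝᵢⱼ]|² < ∞. Then 𝒮ξ = Sξ + ∑ₖ R̃ₖᵀ E[S̄ₖ ξ] + ∑ₖ S̃ₖᵀ E[Q̃ₖ ξ] + ∑ᵢ,ⱼ R̃ᵢᵀ E[Ŝᵢⱼ] E[Q̃ⱼ ξ] (all series converging in L²) defines a bounded linear operator from L²(Ω; ℝⁿ) to L²(Ω; ℝᵐ), with ‖𝒮‖ ≤ esssup_{ω∈Ω}|S(ω)|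 + ∑ₖ E|R̃ₖ|² + ∑ₖ E|S̄ₖ|² + ∑ₖ E|S̃ₖ|² + ∑ₖ E|Q̃ₖ|² + (∑ᵢ,ⱼ |E[Ŝᵢⱼ]|²)^{1/2} (∑ₖ E|R̃ₖ|²)^{1/2} (∑ₖ E|Q̃ₖ|²)^{1/2}. -/

import Mathlib

/-! Every piece of `𝒮` is a composition of three kinds of bounded operators: multiplication by an
essentially bounded matrix `S`, the map `v ↦ A(·)ᵀ v` from `ℝʳ` into `L²`, of norm at most
`‖A‖_{L²} = (E|A|²)^{1/2}`, and its adjoint `ξ ↦ E[A ξ]`. Hence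
`‖R̃ₖᵀ E[S̄ₖ ·]‖ ≤ ‖R̃ₖ‖_{L²} ‖S̄ₖ‖_{L²} ≤ E|R̃ₖ|² + E|S̄ₖ|²`, and
`‖R̃ᵢᵀ E[Ŝᵢⱼ] E[Q̃ⱼ ·]‖ ≤ ‖R̃ᵢ‖_{L²} |E[Ŝᵢⱼ]| ‖Q̃ⱼ‖_{L²}`, which Cauchy–Schwarz over `(i, j)` sums
to the last term of the bound. So the operator series converge absolutely in operator norm, and
an absolutely convergent series in `L²` also converges pointwise almost everywhere, which
identifies `𝒮 ξ` with the pointwise formula. -/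


open MeasureTheory Filter

/-- Matrix–vector multiplication, viewed as a map between Euclidean spaces. -/
noncomputable def matVec {n m : ℕ} (M : Matrix (Fin n) (Fin m) ℝ)
    (v : EuclideanSpace ℝ (Fin m)) : EuclideanSpace ℝ (Fin n) :=
  (WithLp.equiv 2 (Fin n → ℝ)).symm (M.mulVec ((WithLp.equiv 2 (Fin m → ℝ)) v))

/-- Square of the Frobenius norm of a real matrix. -/
def frobSq {n m : ℕ} (M : Matrix (Fin n) (Fin m) ℝ) : ℝ := ∑ i, ∑ j, (M i j) ^ 2

/-- Frobenius norm of a real matrix. -/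
noncomputable def frob {n m : ℕ} (M : Matrix (Fin n) (Fin m) ℝ) : ℝ :=
  Real.sqrt (frobSq M)

/-- Entrywise expectation of a matrix-valued random variable. -/
noncomputable def matExp {n m : ℕ} {Ω : Type*} [MeasurableSpace Ω] (P : MeasureTheory.Measure Ω)
    (M : Ω → Matrix (Fin n) (Fin m) ℝ) : Matrix (Fin n) (Fin m) ℝ :=
  Matrix.of fun a b => ∫ ω, M ω a b ∂P

section MatrixNorm

variable {n m : ℕ}

lemma frobSq_nonneg (M : Matrix (Fin n) (Fin m) ℝ) : 0 ≤ frobSq M := by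
  unfold frobSq; positivity

lemma frob_sq (M : Matrix (Fin n) (Fin m) ℝ) : frob M ^ 2 = frobSq M :=
  Real.sq_sqrt (frobSq_nonneg M)

lemma frob_transpose (M : Matrix (Fin n) (Fin m) ℝ) : frob M.transpose = frob M := by
  rw [frob, frob, frobSq, frobSq, Finset.sum_comm]; rfl

lemma matVec_eq_toEuclideanLin (M : Matrix (Fin n) (Fin m) ℝ) :
    matVec M = Matrix.toEuclideanLin M := rfl

lemma matVec_apply (M : Matrix (Fin n) (Fin m) ℝ) (v : EuclideanSpace ℝ (Fin m)) (i : Fin n) :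
    matVec M v i = ∑ j, M i j * v j := rfl

lemma matVec_add (M : Matrix (Fin n) (Fin m) ℝ) (v w : EuclideanSpace ℝ (Fin m)) :
    matVec M (v + w) = matVec M v + matVec M w :=
  map_add (Matrix.toEuclideanLin M) v w

lemma matVec_smul (M : Matrix (Fin n) (Fin m) ℝ) (c : ℝ) (v : EuclideanSpace ℝ (Fin m)) :
    matVec M (c • v) = c • matVec M v :=
  map_smul (Matrix.toEuclideanLin M) c v

lemma norm_matVec_le (M : Matrix (Fin n) (Fin m) ℝ) (v : EuclideanSpace ℝ (Fin m)) :
    ‖matVec M v‖ ≤ frob M * ‖v‖ := by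
  rw [EuclideanSpace.norm_eq, EuclideanSpace.norm_eq, frob, ← Real.sqrt_mul (frobSq_nonneg M)]
  refine Real.sqrt_le_sqrt ?_
  simp only [Real.norm_eq_abs, sq_abs, matVec_apply]
  rw [frobSq, Finset.sum_mul]
  exact Finset.sum_le_sum fun i _ => Finset.sum_mul_sq_le_sq_mul_sq _ (M i) v

lemma norm_matVec_le_of_frob_le {M : Matrix (Fin n) (Fin m) ℝ} {K : ℝ} (h : frob M ≤ K)
    (v : EuclideanSpace ℝ (Fin m)) : ‖matVec M v‖ ≤ K * ‖v‖ :=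
  (norm_matVec_le M v).trans (mul_le_mul_of_nonneg_right h (norm_nonneg _))

lemma inner_matVec_transpose (M : Matrix (Fin n) (Fin m) ℝ) (v : EuclideanSpace ℝ (Fin n))
    (w : EuclideanSpace ℝ (Fin m)) :
    inner ℝ (matVec M.transpose v) w = inner ℝ v (matVec M w) := by
  rw [matVec_eq_toEuclideanLin, matVec_eq_toEuclideanLin,
    ← Matrix.conjTranspose_eq_transpose_of_trivial, Matrix.toEuclideanLin_conjTranspose_eq_adjoint,
    LinearMap.adjoint_inner_left]

noncomputable def matVecL (M : Matrix (Fin n) (Fin m) ℝ) :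
    EuclideanSpace ℝ (Fin m) →L[ℝ] EuclideanSpace ℝ (Fin n) :=
  (Matrix.toEuclideanLin M).toContinuousLinearMap

@[simp]
lemma matVecL_apply (M : Matrix (Fin n) (Fin m) ℝ) (v : EuclideanSpace ℝ (Fin m)) :
    matVecL M v = matVec M v := rfl

lemma norm_matVecL_le (M : Matrix (Fin n) (Fin m) ℝ) : ‖matVecL M‖ ≤ frob M :=
  ContinuousLinearMap.opNorm_le_bound _ (Real.sqrt_nonneg _) (norm_matVec_le M)

end MatrixNorm

section Measurability

variable {n m : ℕ} {Ω : Type*} [MeasurableSpace Ω] {P : Measure Ω}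
  {A : Ω → Matrix (Fin n) (Fin m) ℝ}

lemma aestronglyMeasurable_matVec (hA : ∀ i j, Measurable fun ω => A ω i j)
    {f : Ω → EuclideanSpace ℝ (Fin m)} (hf : AEStronglyMeasurable f P) :
    AEStronglyMeasurable (fun ω => matVec (A ω) (f ω)) P := by
  refine ((WithLp.measurable_toLp 2 _).comp_aemeasurable
    (aemeasurable_pi_lambda _ fun i => ?_)).aestronglyMeasurable
  change AEMeasurable (fun ω => matVec (A ω) (f ω) i) P
  simp only [matVec_apply]
  exact Finset.aemeasurable_fun_sum _ fun j _ => (hA i j).aemeasurable.mul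
    ((EuclideanSpace.proj j).continuous.measurable.comp_aemeasurable hf.aemeasurable)

lemma memLp_frob (hA : ∀ i j, Measurable fun ω => A ω i j)
    (hAint : Integrable (fun ω => frobSq (A ω)) P) :
    MemLp (fun ω => frob (A ω)) 2 P := by
  have hmeas : Measurable fun ω => frobSq (A ω) :=
    Finset.measurable_sum _ fun i _ => Finset.measurable_sum _ fun j _ => (hA i j).pow_const 2
  refine (memLp_two_iff_integrable_sq hmeas.sqrt.aestronglyMeasurable).mpr ?_
  simpa only [frob, Real.sq_sqrt (frobSq_nonneg _)] using hAint

end Measurability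

lemma MeasureTheory.Lp.norm_sq_eq_integral_norm_sq {Ω E : Type*} [MeasurableSpace Ω]
    {P : Measure Ω} [NormedAddCommGroup E] [InnerProductSpace ℝ E] (f : Lp E 2 P) :
    ‖f‖ ^ 2 = ∫ ω, ‖f ω‖ ^ 2 ∂P := by
  simp only [← real_inner_self_eq_norm_sq, L2.inner_def]

section L2Operators

variable {n m : ℕ} {Ω : Type*} [MeasurableSpace Ω] {P : Measure Ω}
  {A : Ω → Matrix (Fin n) (Fin m) ℝ}

variable (P) in
lemma memLp_matVec_transpose (hA : ∀ i j, Measurable fun ω => A ω i j)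
    (hAint : Integrable (fun ω => frobSq (A ω)) P) (v : EuclideanSpace ℝ (Fin n)) :
    MemLp (fun ω => matVec (A ω).transpose v) 2 P :=
  ((memLp_frob hA hAint).mul_const ‖v‖).of_le
    (aestronglyMeasurable_matVec (fun i j => hA j i) aestronglyMeasurable_const)
    (Eventually.of_forall fun ω => by
      rw [← frob_transpose]; exact (norm_matVec_le _ v).trans (le_abs_self _))

variable (P) in
noncomputable def transposeMulL (A : Ω → Matrix (Fin n) (Fin m) ℝ)
    (hA : ∀ i j, Measurable fun ω => A ω i j) (hAint : Integrable (fun ω => frobSq (A ω)) P) :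
    EuclideanSpace ℝ (Fin n) →L[ℝ] Lp (EuclideanSpace ℝ (Fin m)) 2 P :=
  LinearMap.toContinuousLinearMap
    { toFun v := (memLp_matVec_transpose P hA hAint v).toLp _
      map_add' v w := by
        rw [← MemLp.toLp_add]; congr; funext ω; exact matVec_add _ v w
      map_smul' c v := by
        rw [RingHom.id_apply, ← MemLp.toLp_const_smul]; congr; funext ω; exact matVec_smul _ c v }

lemma integrable_matVec (hA : ∀ i j, Measurable fun ω => A ω i j)
    (hAint : Integrable (fun ω => frobSq (A ω)) P) (ξ : Lp (EuclideanSpace ℝ (Fin m)) 2 P) :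
    Integrable (fun ω => matVec (A ω) (ξ ω)) P :=
  ((memLp_frob hA hAint).integrable_mul (Lp.memLp ξ).norm).mono'
    (aestronglyMeasurable_matVec hA (Lp.aestronglyMeasurable ξ))
    (ae_of_all _ fun _ => norm_matVec_le _ _)

variable (hA : ∀ i j, Measurable fun ω => A ω i j)
  (hAint : Integrable (fun ω => frobSq (A ω)) P)

lemma coeFn_transposeMulL (v : EuclideanSpace ℝ (Fin n)) :
    transposeMulL P A hA hAint v =ᵐ[P] fun ω => matVec (A ω).transpose v :=
  MemLp.coeFn_toLp (memLp_matVec_transpose P hA hAint v)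

lemma norm_transposeMulL_le : ‖transposeMulL P A hA hAint‖ ≤ √(∫ ω, frobSq (A ω) ∂P) := by
  have hint : 0 ≤ ∫ ω, frobSq (A ω) ∂P := integral_nonneg fun _ => frobSq_nonneg _
  refine ContinuousLinearMap.opNorm_le_bound _ (Real.sqrt_nonneg _) fun v => ?_
  rw [← pow_le_pow_iff_left₀ (norm_nonneg _) (by positivity) two_ne_zero, mul_pow,
    Real.sq_sqrt hint, Lp.norm_sq_eq_integral_norm_sq, ← integral_mul_const]
  refine integral_mono_of_nonneg (ae_of_all _ fun _ => sq_nonneg _) (hAint.mul_const _) ?_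
  filter_upwards [coeFn_transposeMulL hA hAint v] with ω h
  rw [h, ← frob_sq, ← mul_pow, ← frob_transpose]
  exact pow_le_pow_left₀ (norm_nonneg _) (norm_matVec_le _ _) 2

variable (P) in
/-- `ξ ↦ E[A ξ]`; taking it as an adjoint gives linearity and the norm bound for free. -/
noncomputable def expectMulL (A : Ω → Matrix (Fin n) (Fin m) ℝ)
    (hA : ∀ i j, Measurable fun ω => A ω i j) (hAint : Integrable (fun ω => frobSq (A ω)) P) :
    Lp (EuclideanSpace ℝ (Fin m)) 2 P →L[ℝ] EuclideanSpace ℝ (Fin n) :=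
  (transposeMulL P A hA hAint).adjoint

lemma expectMulL_apply (ξ : Lp (EuclideanSpace ℝ (Fin m)) 2 P) :
    expectMulL P A hA hAint ξ = ∫ ω, matVec (A ω) (ξ ω) ∂P := by
  refine ext_inner_left ℝ fun v => ?_
  rw [expectMulL, ContinuousLinearMap.adjoint_inner_right, L2.inner_def,
    ← integral_inner (integrable_matVec hA hAint ξ)]
  refine integral_congr_ae ?_
  filter_upwards [coeFn_transposeMulL hA hAint v] with ω h
  rw [h, inner_matVec_transpose]

lemma norm_expectMulL_le : ‖expectMulL P A hA hAint‖ ≤ √(∫ ω, frobSq (A ω) ∂P) := by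
  rw [expectMulL, LinearIsometryEquiv.norm_map]
  exact norm_transposeMulL_le hA hAint

end L2Operators

section BoundedMultiplication

variable {n m : ℕ} {Ω : Type*} [MeasurableSpace Ω] {P : Measure Ω}
  {S : Ω → Matrix (Fin n) (Fin m) ℝ} {K : ℝ}

variable (P) in
lemma memLp_matVec_of_ae_frob_le (hS : ∀ i j, Measurable fun ω => S ω i j)
    (hK : ∀ᵐ ω ∂P, frob (S ω) ≤ K) (ξ : Lp (EuclideanSpace ℝ (Fin m)) 2 P) :
    MemLp (fun ω => matVec (S ω) (ξ ω)) 2 P :=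
  ((Lp.memLp ξ).norm.const_mul K).of_le
    (aestronglyMeasurable_matVec hS (Lp.aestronglyMeasurable ξ)) (by
      filter_upwards [hK] with ω h
      exact (norm_matVec_le_of_frob_le h _).trans (le_abs_self _))

variable (P) in
noncomputable def mulL (S : Ω → Matrix (Fin n) (Fin m) ℝ)
    (hS : ∀ i j, Measurable fun ω => S ω i j) (hK : ∀ᵐ ω ∂P, frob (S ω) ≤ K) :
    Lp (EuclideanSpace ℝ (Fin m)) 2 P →L[ℝ] Lp (EuclideanSpace ℝ (Fin n)) 2 P :=
  LinearMap.mkContinuous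
    { toFun ξ := (memLp_matVec_of_ae_frob_le P hS hK ξ).toLp _
      map_add' ξ η := by
        rw [← MemLp.toLp_add, MemLp.toLp_eq_toLp_iff]
        filter_upwards [Lp.coeFn_add ξ η] with ω h
        simp only [h, Pi.add_apply, matVec_add]
      map_smul' c ξ := by
        rw [RingHom.id_apply, ← MemLp.toLp_const_smul, MemLp.toLp_eq_toLp_iff]
        filter_upwards [Lp.coeFn_smul c ξ] with ω h
        simp only [h, Pi.smul_apply, matVec_smul] }
    K fun ξ => Lp.norm_le_mul_norm_of_ae_le_mul
      (f := (memLp_matVec_of_ae_frob_le P hS hK ξ).toLp _) (by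
        filter_upwards [MemLp.coeFn_toLp (memLp_matVec_of_ae_frob_le P hS hK ξ), hK] with ω h hω
        rw [h]
        exact norm_matVec_le_of_frob_le hω (ξ ω))

variable (hS : ∀ i j, Measurable fun ω => S ω i j) (hK : ∀ᵐ ω ∂P, frob (S ω) ≤ K)

lemma coeFn_mulL (ξ : Lp (EuclideanSpace ℝ (Fin m)) 2 P) :
    mulL P S hS hK ξ =ᵐ[P] fun ω => matVec (S ω) (ξ ω) :=
  MemLp.coeFn_toLp (memLp_matVec_of_ae_frob_le P hS hK ξ)

lemma norm_mulL_le (hK0 : 0 ≤ K) : ‖mulL P S hS hK‖ ≤ K :=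
  LinearMap.mkContinuous_norm_le _ hK0 _

end BoundedMultiplication

section LpSeries

variable {ι Ω E : Type*} [Countable ι] [MeasurableSpace Ω] {P : Measure Ω}
  [NormedAddCommGroup E] [CompleteSpace E] {p : ENNReal} [Fact (1 ≤ p)]

lemma MeasureTheory.Lp.coeFn_tsum_of_ae_eq {f : ι → Lp E p P} {g : ι → Ω → E}
    (hf : Summable fun i => ‖f i‖) (hfg : ∀ i, f i =ᵐ[P] g i) :
    ⇑(∑' i, f i) =ᵐ[P] fun ω => ∑' i, g i ω := by
  filter_upwards [Lp.coeFn_tsum (tsum_enorm_ne_top_iff_summable_norm.2 hf),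
    ae_all_iff.2 hfg] with ω hsum hω
  simp only [hsum, hω]

lemma MeasureTheory.Lp.tendsto_eLpNorm_sum_sub_tsum {f : ι → Lp E p P} {g : ι → Ω → E}
    (hf : Summable fun i => ‖f i‖) (hfg : ∀ i, f i =ᵐ[P] g i) :
    Tendsto (fun s : Finset ι => eLpNorm (fun ω => ∑ i ∈ s, g i ω - ∑' i, g i ω) p P)
      atTop (nhds 0) := by
  refine ((Lp.tendsto_Lp_iff_tendsto_eLpNorm' _ _).1 (Summable.of_norm hf).hasSum).congr
    fun s => eLpNorm_congr_ae ?_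
  filter_upwards [Lp.coeFn_fun_finsetSum s f, Lp.coeFn_tsum_of_ae_eq hf hfg,
    ae_all_iff.2 hfg] with ω hs htsum hω
  simp only [Pi.sub_apply, hs, htsum, hω]

variable [NormedSpace ℝ E] {X : Type*} [NormedAddCommGroup X] [NormedSpace ℝ X]

lemma tendsto_eLpNorm_sum_sub_tsum_and_coeFn_tsum_apply
    {T : ι → X →L[ℝ] Lp E p P} (hT : Summable fun i => ‖T i‖) {x : X} {g : ι → Ω → E}
    (hg : ∀ i, T i x =ᵐ[P] g i) :
    Tendsto (fun s : Finset ι => eLpNorm (fun ω => ∑ i ∈ s, g i ω - ∑' i, g i ω) p P)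
        atTop (nhds 0) ∧
      ⇑((∑' i, T i) x) =ᵐ[P] fun ω => ∑' i, g i ω := by
  have hTx : Summable fun i => ‖T i x‖ :=
    (hT.mul_right ‖x‖).of_nonneg_of_le (fun _ => norm_nonneg _) fun i => (T i).le_opNorm x
  have happly : (∑' i, T i) x = ∑' i, T i x :=
    (ContinuousLinearMap.apply ℝ _ x).map_tsum (Summable.of_norm hT)
  exact ⟨Lp.tendsto_eLpNorm_sum_sub_tsum hTx hg, happly ▸ Lp.coeFn_tsum_of_ae_eq hTx hg⟩

end LpSeries

lemma Real.sqrt_mul_sqrt_le_add {a b : ℝ} (ha : 0 ≤ a) (hb : 0 ≤ b) : √a * √b ≤ a + b := by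
  nlinarith [sq_nonneg (√a - √b), Real.sq_sqrt ha, Real.sq_sqrt hb]

section SqrtSeries

variable {ι κ : Type*}

lemma summable_and_tsum_sqrt_mul_sqrt_le {f g : ι → ℝ} (hf0 : ∀ i, 0 ≤ f i) (hg0 : ∀ i, 0 ≤ g i)
    (hf : Summable f) (hg : Summable g) :
    Summable (fun i => √(f i) * √(g i)) ∧
      ∑' i, √(f i) * √(g i) ≤ √(∑' i, f i) * √(∑' i, g i) := by
  have hbound (s : Finset ι) : ∑ i ∈ s, √(f i) * √(g i) ≤ √(∑' i, f i) * √(∑' i, g i) := by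
    refine (Real.sum_sqrt_mul_sqrt_le s hf0 hg0).trans ?_
    gcongr
    exacts [hf.sum_le_tsum s fun i _ => hf0 i, hg.sum_le_tsum s fun i _ => hg0 i]
  have hsum := summable_of_sum_le (fun i => by positivity) hbound
  exact ⟨hsum, hsum.tsum_le_of_sum_le hbound⟩

lemma summable_and_tsum_sqrt_mul_mul_sqrt_le {a : ι → ℝ} {c : κ → ℝ} {h : ι × κ → ℝ}
    (ha0 : ∀ i, 0 ≤ a i) (hc0 : ∀ k, 0 ≤ c k) (hh0 : ∀ q, 0 ≤ h q)
    (ha : Summable a) (hc : Summable c) (hh : Summable h) :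
    Summable (fun q : ι × κ => √(a q.1 * c q.2) * √(h q)) ∧
      ∑' q : ι × κ, √(a q.1 * c q.2) * √(h q) ≤ √(∑' q, h q) * √(∑' i, a i) * √(∑' k, c k) := by
  have hac : Summable fun q : ι × κ => a q.1 * c q.2 := ha.mul_of_nonneg hc ha0 hc0
  obtain ⟨hsum, hle⟩ :=
    summable_and_tsum_sqrt_mul_sqrt_le (fun q => mul_nonneg (ha0 q.1) (hc0 q.2)) hh0 hac hh
  refine ⟨hsum, hle.trans_eq ?_⟩
  rw [← ha.tsum_mul_tsum hc hac, Real.sqrt_mul (tsum_nonneg ha0)]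
  ring

end SqrtSeries

section CrossOperators

variable {n m r r' : ℕ} {Ω : Type*} [MeasurableSpace Ω] {P : Measure Ω}
  {A : Ω → Matrix (Fin r) (Fin m) ℝ} (hA : ∀ i j, Measurable fun ω => A ω i j)
  (hAint : Integrable (fun ω => frobSq (A ω)) P)

lemma norm_transposeMulL_comp_expectMulL_le {B : Ω → Matrix (Fin r) (Fin n) ℝ}
    (hB : ∀ i j, Measurable fun ω => B ω i j) (hBint : Integrable (fun ω => frobSq (B ω)) P) :
    ‖(transposeMulL P A hA hAint).comp (expectMulL P B hB hBint)‖ ≤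
      (∫ ω, frobSq (A ω) ∂P) + ∫ ω, frobSq (B ω) ∂P :=
  (ContinuousLinearMap.opNorm_comp_le _ _).trans <|
    (mul_le_mul (norm_transposeMulL_le hA hAint) (norm_expectMulL_le hB hBint) (norm_nonneg _)
      (Real.sqrt_nonneg _)).trans <|
    Real.sqrt_mul_sqrt_le_add (integral_nonneg fun _ => frobSq_nonneg _)
      (integral_nonneg fun _ => frobSq_nonneg _)

lemma coeFn_transposeMulL_comp_expectMulL {B : Ω → Matrix (Fin r) (Fin n) ℝ}
    (hB : ∀ i j, Measurable fun ω => B ω i j) (hBint : Integrable (fun ω => frobSq (B ω)) P)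
    (ξ : Lp (EuclideanSpace ℝ (Fin n)) 2 P) :
    (transposeMulL P A hA hAint).comp (expectMulL P B hB hBint) ξ =ᵐ[P]
      fun ω => matVec (A ω).transpose (∫ ω', matVec (B ω') (ξ ω') ∂P) := by
  rw [ContinuousLinearMap.comp_apply, expectMulL_apply]
  exact coeFn_transposeMulL hA hAint _

lemma norm_transposeMulL_comp_matVecL_comp_expectMulL_le (M : Matrix (Fin r) (Fin r') ℝ)
    {B : Ω → Matrix (Fin r') (Fin n) ℝ} (hB : ∀ i j, Measurable fun ω => B ω i j)
    (hBint : Integrable (fun ω => frobSq (B ω)) P) :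
    ‖(transposeMulL P A hA hAint).comp ((matVecL M).comp (expectMulL P B hB hBint))‖ ≤
      √((∫ ω, frobSq (A ω) ∂P) * ∫ ω, frobSq (B ω) ∂P) * frob M := by
  rw [Real.sqrt_mul (integral_nonneg fun _ => frobSq_nonneg _)]
  calc _ ≤ ‖transposeMulL P A hA hAint‖ * (‖matVecL M‖ * ‖expectMulL P B hB hBint‖) :=
        (ContinuousLinearMap.opNorm_comp_le _ _).trans
          (mul_le_mul_of_nonneg_left (ContinuousLinearMap.opNorm_comp_le _ _) (norm_nonneg _))
    _ ≤ √(∫ ω, frobSq (A ω) ∂P) * (frob M * √(∫ ω, frobSq (B ω) ∂P)) := by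
        gcongr
        exacts [norm_transposeMulL_le hA hAint, Real.sqrt_nonneg _, norm_matVecL_le M,
          norm_expectMulL_le hB hBint]
    _ = _ := by ring

lemma coeFn_transposeMulL_comp_matVecL_comp_expectMulL (M : Matrix (Fin r) (Fin r') ℝ)
    {B : Ω → Matrix (Fin r') (Fin n) ℝ} (hB : ∀ i j, Measurable fun ω => B ω i j)
    (hBint : Integrable (fun ω => frobSq (B ω)) P) (ξ : Lp (EuclideanSpace ℝ (Fin n)) 2 P) :
    (transposeMulL P A hA hAint).comp ((matVecL M).comp (expectMulL P B hB hBint)) ξ =ᵐ[P]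
      fun ω => matVec (A ω).transpose (matVec M (∫ ω', matVec (B ω') (ξ ω') ∂P)) := by
  rw [ContinuousLinearMap.comp_apply, ContinuousLinearMap.comp_apply, expectMulL_apply,
    matVecL_apply]
  exact coeFn_transposeMulL hA hAint _

end CrossOperators

section CrossSeries

variable {n m r : ℕ} {Ω : Type*} [MeasurableSpace Ω] {P : Measure Ω}
  {A : ℕ → Ω → Matrix (Fin r) (Fin m) ℝ}

lemma exists_bounded_series_transposeMul_expectMul (hA : ∀ k i j, Measurable fun ω => A k ω i j)
    (hAint : ∀ k, Integrable (fun ω => frobSq (A k ω)) P)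
    (hAsum : Summable fun k => ∫ ω, frobSq (A k ω) ∂P) {B : ℕ → Ω → Matrix (Fin r) (Fin n) ℝ}
    (hB : ∀ k i j, Measurable fun ω => B k ω i j)
    (hBint : ∀ k, Integrable (fun ω => frobSq (B k ω)) P)
    (hBsum : Summable fun k => ∫ ω, frobSq (B k ω) ∂P) :
    ∃ U : Lp (EuclideanSpace ℝ (Fin n)) 2 P →L[ℝ] Lp (EuclideanSpace ℝ (Fin m)) 2 P,
      ‖U‖ ≤ (∑' k, ∫ ω, frobSq (A k ω) ∂P) + ∑' k, ∫ ω, frobSq (B k ω) ∂P ∧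
      ∀ ξ : Lp (EuclideanSpace ℝ (Fin n)) 2 P,
        Tendsto (fun s : Finset ℕ => eLpNorm (fun ω =>
            (∑ k ∈ s, matVec (A k ω).transpose (∫ ω', matVec (B k ω') (ξ ω') ∂P)) -
            ∑' k, matVec (A k ω).transpose (∫ ω', matVec (B k ω') (ξ ω') ∂P)) 2 P)
          atTop (nhds 0) ∧
        U ξ =ᵐ[P] fun ω => ∑' k, matVec (A k ω).transpose (∫ ω', matVec (B k ω') (ξ ω') ∂P) := by
  have hT k := norm_transposeMulL_comp_expectMulL_le (hA k) (hAint k) (hB k) (hBint k)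
  have hs := (hAsum.add hBsum).of_nonneg_of_le (fun _ => norm_nonneg _) hT
  exact ⟨_, tsum_of_norm_bounded (hAsum.hasSum.add hBsum.hasSum) hT, fun ξ =>
    tendsto_eLpNorm_sum_sub_tsum_and_coeFn_tsum_apply hs fun k =>
      coeFn_transposeMulL_comp_expectMulL (hA k) (hAint k) (hB k) (hBint k) ξ⟩

lemma exists_bounded_series_transposeMul_matVec_expectMul {r' : ℕ}
    (hA : ∀ k i j, Measurable fun ω => A k ω i j)
    (hAint : ∀ k, Integrable (fun ω => frobSq (A k ω)) P)
    (hAsum : Summable fun k => ∫ ω, frobSq (A k ω) ∂P) {M : ℕ × ℕ → Matrix (Fin r) (Fin r') ℝ}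
    (hM : Summable fun q => frobSq (M q)) {B : ℕ → Ω → Matrix (Fin r') (Fin n) ℝ}
    (hB : ∀ k i j, Measurable fun ω => B k ω i j)
    (hBint : ∀ k, Integrable (fun ω => frobSq (B k ω)) P)
    (hBsum : Summable fun k => ∫ ω, frobSq (B k ω) ∂P) :
    ∃ U : Lp (EuclideanSpace ℝ (Fin n)) 2 P →L[ℝ] Lp (EuclideanSpace ℝ (Fin m)) 2 P,
      ‖U‖ ≤ √(∑' q, frobSq (M q)) * √(∑' k, ∫ ω, frobSq (A k ω) ∂P) *
        √(∑' k, ∫ ω, frobSq (B k ω) ∂P) ∧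
      ∀ ξ : Lp (EuclideanSpace ℝ (Fin n)) 2 P,
        Tendsto (fun s : Finset (ℕ × ℕ) => eLpNorm (fun ω =>
            (∑ q ∈ s, matVec (A q.1 ω).transpose
              (matVec (M q) (∫ ω', matVec (B q.2 ω') (ξ ω') ∂P))) -
            ∑' q : ℕ × ℕ, matVec (A q.1 ω).transpose
              (matVec (M q) (∫ ω', matVec (B q.2 ω') (ξ ω') ∂P))) 2 P)
          atTop (nhds 0) ∧
        U ξ =ᵐ[P] fun ω => ∑' q : ℕ × ℕ, matVec (A q.1 ω).transpose
          (matVec (M q) (∫ ω', matVec (B q.2 ω') (ξ ω') ∂P)) := by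
  have hT (q : ℕ × ℕ) := norm_transposeMulL_comp_matVecL_comp_expectMulL_le
    (hA q.1) (hAint q.1) (M q) (hB q.2) (hBint q.2)
  obtain ⟨hsum, hle⟩ := summable_and_tsum_sqrt_mul_mul_sqrt_le
    (fun _ => integral_nonneg fun _ => frobSq_nonneg _)
    (fun _ => integral_nonneg fun _ => frobSq_nonneg _) (fun _ => frobSq_nonneg _) hAsum hBsum hM
  have hs := hsum.of_nonneg_of_le (fun _ => norm_nonneg _) hT
  exact ⟨_, (norm_tsum_le_tsum_norm hs).trans ((hs.tsum_le_tsum hT hsum).trans hle), fun ξ =>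
    tendsto_eLpNorm_sum_sub_tsum_and_coeFn_tsum_apply hs fun q =>
      coeFn_transposeMulL_comp_matVecL_comp_expectMulL (hA q.1) (hAint q.1) (M q)
        (hB q.2) (hBint q.2) ξ⟩

end CrossSeries

section EssSup

variable {Ω : Type*} [MeasurableSpace Ω] {P : Measure Ω} {f : Ω → ℝ}

lemma ae_le_essSup_of_exists_ae_le (hf : ∃ C, ∀ᵐ ω ∂P, f ω ≤ C) :
    ∀ᵐ ω ∂P, f ω ≤ essSup f P :=
  ae_le_essSup (isBoundedUnder_of_eventually_le hf.choose_spec)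

lemma essSup_nonneg_of_exists_ae_le [NeZero P] (hf0 : ∀ ω, 0 ≤ f ω)
    (hf : ∃ C, ∀ᵐ ω ∂P, f ω ≤ C) : 0 ≤ essSup f P :=
  let ⟨ω, hω⟩ := (ae_le_essSup_of_exists_ae_le hf).exists
  (hf0 ω).trans hω

end EssSup

theorem meanField_cross_operator_bounded_general
    (n m : ℕ) {Ω : Type*} [MeasurableSpace Ω] (P : Measure Ω) [IsProbabilityMeasure P]
    (S : Ω → Matrix (Fin m) (Fin n) ℝ)
    (Rtil : ℕ → Ω → Matrix (Fin m) (Fin m) ℝ)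
    (Sbar : ℕ → Ω → Matrix (Fin m) (Fin n) ℝ)
    (Stil : ℕ → Ω → Matrix (Fin n) (Fin m) ℝ)
    (Qtil : ℕ → Ω → Matrix (Fin n) (Fin n) ℝ)
    (Shat : ℕ → ℕ → Ω → Matrix (Fin m) (Fin n) ℝ)
    (hSmeas : ∀ i j, Measurable fun ω => S ω i j)
    (hSbdd : ∃ C : ℝ, ∀ᵐ ω ∂P, frob (S ω) ≤ C)
    (hRtilMeas : ∀ k i j, Measurable fun ω => Rtil k ω i j)
    (hSbarMeas : ∀ k i j, Measurable fun ω => Sbar k ω i j)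
    (hStilMeas : ∀ k i j, Measurable fun ω => Stil k ω i j)
    (hQtilMeas : ∀ k i j, Measurable fun ω => Qtil k ω i j)
    (hRtilInt : ∀ k, Integrable (fun ω => frobSq (Rtil k ω)) P)
    (hSbarInt : ∀ k, Integrable (fun ω => frobSq (Sbar k ω)) P)
    (hStilInt : ∀ k, Integrable (fun ω => frobSq (Stil k ω)) P)
    (hQtilInt : ∀ k, Integrable (fun ω => frobSq (Qtil k ω)) P)
    (hRtilSum : Summable fun k => ∫ ω, frobSq (Rtil k ω) ∂P)
    (hSbarSum : Summable fun k => ∫ ω, frobSq (Sbar k ω) ∂P)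
    (hStilSum : Summable fun k => ∫ ω, frobSq (Stil k ω) ∂P)
    (hQtilSum : Summable fun k => ∫ ω, frobSq (Qtil k ω) ∂P)
    (hShatSum : Summable fun p : ℕ × ℕ => frobSq (matExp P (Shat p.1 p.2))) :
    (∀ ξ : Lp (EuclideanSpace ℝ (Fin n)) 2 P,
      Tendsto (fun s : Finset ℕ =>
          eLpNorm (fun ω =>
              (∑ k ∈ s, matVec (Rtil k ω).transpose (∫ ω', matVec (Sbar k ω') (ξ ω') ∂P)) -
              ∑' k, matVec (Rtil k ω).transpose (∫ ω', matVec (Sbar k ω') (ξ ω') ∂P)) 2 P)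
        atTop (nhds 0) ∧
      Tendsto (fun s : Finset ℕ =>
          eLpNorm (fun ω =>
              (∑ k ∈ s, matVec (Stil k ω).transpose (∫ ω', matVec (Qtil k ω') (ξ ω') ∂P)) -
              ∑' k, matVec (Stil k ω).transpose (∫ ω', matVec (Qtil k ω') (ξ ω') ∂P)) 2 P)
        atTop (nhds 0) ∧
      Tendsto (fun s : Finset (ℕ × ℕ) =>
          eLpNorm (fun ω =>
              (∑ p ∈ s, matVec (Rtil p.1 ω).transpose
                  (matVec (matExp P (Shat p.1 p.2))
                    (∫ ω', matVec (Qtil p.2 ω') (ξ ω') ∂P))) -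
              ∑' p : ℕ × ℕ, matVec (Rtil p.1 ω).transpose
                  (matVec (matExp P (Shat p.1 p.2))
                    (∫ ω', matVec (Qtil p.2 ω') (ξ ω') ∂P))) 2 P)
        atTop (nhds 0)) ∧
    ∃ 𝒮 : Lp (EuclideanSpace ℝ (Fin n)) 2 P →L[ℝ] Lp (EuclideanSpace ℝ (Fin m)) 2 P,
      ‖𝒮‖ ≤ essSup (fun ω => frob (S ω)) P +
          (∑' k, ∫ ω, frobSq (Rtil k ω) ∂P) + (∑' k, ∫ ω, frobSq (Sbar k ω) ∂P) +
          (∑' k, ∫ ω, frobSq (Stil k ω) ∂P) + (∑' k, ∫ ω, frobSq (Qtil k ω) ∂P) +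
          Real.sqrt (∑' p : ℕ × ℕ, frobSq (matExp P (Shat p.1 p.2))) *
            Real.sqrt (∑' k, ∫ ω, frobSq (Rtil k ω) ∂P) *
            Real.sqrt (∑' k, ∫ ω, frobSq (Qtil k ω) ∂P) ∧
      ∀ ξ : Lp (EuclideanSpace ℝ (Fin n)) 2 P,
        (𝒮 ξ : Ω → EuclideanSpace ℝ (Fin m)) =ᵐ[P]
          fun ω => matVec (S ω) (ξ ω) +
            (∑' k, matVec (Rtil k ω).transpose (∫ ω', matVec (Sbar k ω') (ξ ω') ∂P)) +
            (∑' k, matVec (Stil k ω).transpose (∫ ω', matVec (Qtil k ω') (ξ ω') ∂P)) +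
            ∑' p : ℕ × ℕ, matVec (Rtil p.1 ω).transpose
              (matVec (matExp P (Shat p.1 p.2))
                (∫ ω', matVec (Qtil p.2 ω') (ξ ω') ∂P)) := by
  have hS := ae_le_essSup_of_exists_ae_le hSbdd
  obtain ⟨U₁, hU₁, series₁⟩ := exists_bounded_series_transposeMul_expectMul
    hRtilMeas hRtilInt hRtilSum hSbarMeas hSbarInt hSbarSum
  obtain ⟨U₂, hU₂, series₂⟩ := exists_bounded_series_transposeMul_expectMul
    hStilMeas hStilInt hStilSum hQtilMeas hQtilInt hQtilSum
  obtain ⟨U₃, hU₃, series₃⟩ := exists_bounded_series_transposeMul_matVec_expectMul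
    hRtilMeas hRtilInt hRtilSum hShatSum hQtilMeas hQtilInt hQtilSum
  refine ⟨fun ξ => ⟨(series₁ ξ).1, (series₂ ξ).1, (series₃ ξ).1⟩,
    mulL P S hSmeas hS + U₁ + U₂ + U₃, ?_, fun ξ => ?_⟩
  · have hU₀ := norm_mulL_le hSmeas hS
      (essSup_nonneg_of_exists_ae_le (fun _ => Real.sqrt_nonneg _) hSbdd)
    linarith [norm_add₄_le (a := mulL P S hSmeas hS) (b := U₁) (c := U₂) (d := U₃)]
  · exact (Lp.coeFn_add _ _).trans <| ((Lp.coeFn_add _ _).trans <| ((Lp.coeFn_add _ _).trans <|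
      (coeFn_mulL hSmeas hS ξ).add (series₁ ξ).2).add (series₂ ξ).2).add (series₃ ξ).2

/-- The mean-field cross operator
`𝒮ξ = Sξ + ∑ₖ R̃ₖᵀ E[S̄ₖ ξ] + ∑ₖ S̃ₖᵀ E[Q̃ₖ ξ] + ∑ᵢⱼ R̃ᵢᵀ E[Ŝᵢⱼ] E[Q̃ⱼ ξ]`
(with all series converging in `L²`) is a bounded operator from `L²(Ω; ℝⁿ)` to `L²(Ω; ℝᵐ)`,
with `‖𝒮‖ ≤ esssup|S| + ∑ₖ E|R̃ₖ|² + ∑ₖ E|S̄ₖ|² + ∑ₖ E|S̃ₖ|² + ∑ₖ E|Q̃ₖ|²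
      + (∑ᵢⱼ |E[Ŝᵢⱼ]|²)^{1/2}(∑ₖ E|R̃ₖ|²)^{1/2}(∑ₖ E|Q̃ₖ|²)^{1/2}`. -/
theorem meanField_cross_operator_bounded
    (n m : ℕ) {Ω : Type*} [MeasurableSpace Ω] (P : Measure Ω) [IsProbabilityMeasure P]
    (S : Ω → Matrix (Fin m) (Fin n) ℝ)
    (Rtil : ℕ → Ω → Matrix (Fin m) (Fin m) ℝ)
    (Sbar : ℕ → Ω → Matrix (Fin m) (Fin n) ℝ)
    (Stil : ℕ → Ω → Matrix (Fin n) (Fin m) ℝ)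
    (Qtil : ℕ → Ω → Matrix (Fin n) (Fin n) ℝ)
    (Shat : ℕ → ℕ → Ω → Matrix (Fin m) (Fin n) ℝ)
    (hSmeas : ∀ i j, Measurable fun ω => S ω i j)
    (hSbdd : ∃ C : ℝ, ∀ᵐ ω ∂P, frob (S ω) ≤ C)
    (hRtilMeas : ∀ k i j, Measurable fun ω => Rtil k ω i j)
    (hSbarMeas : ∀ k i j, Measurable fun ω => Sbar k ω i j)
    (hStilMeas : ∀ k i j, Measurable fun ω => Stil k ω i j)
    (hQtilMeas : ∀ k i j, Measurable fun ω => Qtil k ω i j)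
    (hRtilInt : ∀ k, Integrable (fun ω => frobSq (Rtil k ω)) P)
    (hSbarInt : ∀ k, Integrable (fun ω => frobSq (Sbar k ω)) P)
    (hStilInt : ∀ k, Integrable (fun ω => frobSq (Stil k ω)) P)
    (hQtilInt : ∀ k, Integrable (fun ω => frobSq (Qtil k ω)) P)
    (hRtilSum : Summable fun k => ∫ ω, frobSq (Rtil k ω) ∂P)
    (hSbarSum : Summable fun k => ∫ ω, frobSq (Sbar k ω) ∂P)
    (hStilSum : Summable fun k => ∫ ω, frobSq (Stil k ω) ∂P)
    (hQtilSum : Summable fun k => ∫ ω, frobSq (Qtil k ω) ∂P)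
    (hShatInt : ∀ i j a b, Integrable (fun ω => Shat i j ω a b) P)
    (hShatSum : Summable fun p : ℕ × ℕ => frobSq (matExp P (Shat p.1 p.2))) :
    (∀ ξ : Lp (EuclideanSpace ℝ (Fin n)) 2 P,
      Tendsto (fun s : Finset ℕ =>
          eLpNorm (fun ω =>
              (∑ k ∈ s, matVec (Rtil k ω).transpose (∫ ω', matVec (Sbar k ω') (ξ ω') ∂P)) -
              ∑' k, matVec (Rtil k ω).transpose (∫ ω', matVec (Sbar k ω') (ξ ω') ∂P)) 2 P)
        atTop (nhds 0) ∧
      Tendsto (fun s : Finset ℕ =>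
          eLpNorm (fun ω =>
              (∑ k ∈ s, matVec (Stil k ω).transpose (∫ ω', matVec (Qtil k ω') (ξ ω') ∂P)) -
              ∑' k, matVec (Stil k ω).transpose (∫ ω', matVec (Qtil k ω') (ξ ω') ∂P)) 2 P)
        atTop (nhds 0) ∧
      Tendsto (fun s : Finset (ℕ × ℕ) =>
          eLpNorm (fun ω =>
              (∑ p ∈ s, matVec (Rtil p.1 ω).transpose
                  (matVec (matExp P (Shat p.1 p.2))
                    (∫ ω', matVec (Qtil p.2 ω') (ξ ω') ∂P))) -
              ∑' p : ℕ × ℕ, matVec (Rtil p.1 ω).transpose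
                  (matVec (matExp P (Shat p.1 p.2))
                    (∫ ω', matVec (Qtil p.2 ω') (ξ ω') ∂P))) 2 P)
        atTop (nhds 0)) ∧
    ∃ 𝒮 : Lp (EuclideanSpace ℝ (Fin n)) 2 P →L[ℝ] Lp (EuclideanSpace ℝ (Fin m)) 2 P,
      ‖𝒮‖ ≤ essSup (fun ω => frob (S ω)) P +
          (∑' k, ∫ ω, frobSq (Rtil k ω) ∂P) + (∑' k, ∫ ω, frobSq (Sbar k ω) ∂P) +
          (∑' k, ∫ ω, frobSq (Stil k ω) ∂P) + (∑' k, ∫ ω, frobSq (Qtil k ω) ∂P) +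
          Real.sqrt (∑' p : ℕ × ℕ, frobSq (matExp P (Shat p.1 p.2))) *
            Real.sqrt (∑' k, ∫ ω, frobSq (Rtil k ω) ∂P) *
            Real.sqrt (∑' k, ∫ ω, frobSq (Qtil k ω) ∂P) ∧
      ∀ ξ : Lp (EuclideanSpace ℝ (Fin n)) 2 P,
        (𝒮 ξ : Ω → EuclideanSpace ℝ (Fin m)) =ᵐ[P]
          fun ω => matVec (S ω) (ξ ω) +
            (∑' k, matVec (Rtil k ω).transpose (∫ ω', matVec (Sbar k ω') (ξ ω') ∂P)) +
            (∑' k, matVec (Stil k ω).transpose (∫ ω', matVec (Qtil k ω') (ξ ω') ∂P)) +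
            ∑' p : ℕ × ℕ, matVec (Rtil p.1 ω).transpose
              (matVec (matExp P (Shat p.1 p.2))
                (∫ ω', matVec (Qtil p.2 ω') (ξ ω') ∂P)) :=
  meanField_cross_operator_bounded_general n m P S Rtil Sbar Stil Qtil Shat hSmeas hSbdd hRtilMeas
    hSbarMeas hStilMeas hQtilMeas hRtilInt hSbarInt hStilInt hQtilInt hRtilSum hSbarSum hStilSum
    hQtilSum hShatSum
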